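/- arXiv:math/0111156 — 4 statements merged into one kernel-verified Lean document; each statement's English description precedes it below -/
import Mathlib

section
/- Let ω_m be a permutation of [n]. Define a partial order ⪯ on [n] by i ⪯ j if and only if i = j, or i appears before j in ω_m and i < j as integers. Then a subset Λ of [n] is an order ideal of this poset if and only if Λ = {ω(1), ω(2), ..., ω(k)} for some k and some permutation ω with INV(ω) ⊆ INV(ω_m). -/
/-! Common definitions: graded posets, saturated/maximal chains, EL-labelings,
inversions and weak order on permutations, descent operators, flag vectors. -/

section Perm

/-- The inversion set `INV(v) = {(v j, v i) : i < j, v i > v j}` of a permutation of `Fin n`. -/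
def invSet {n : ℕ} (v : Equiv.Perm (Fin n)) : Set (Fin n × Fin n) :=
  {p | ∃ i j : Fin n, i < j ∧ v j = p.1 ∧ v i = p.2 ∧ v j < v i}

/-- The number of inversions of a permutation. -/
noncomputable def invCount {n : ℕ} (v : Equiv.Perm (Fin n)) : ℕ :=
  (invSet v).ncard

/-- The adjacent transposition swapping `i` and `i+1` (0-indexed) in `Fin n`
(junk value `1` if out of range). -/
def adjSwap (n : ℕ) (i : ℕ) : Equiv.Perm (Fin n) :=
  if h : i + 1 < n then Equiv.swap ⟨i, Nat.lt_of_succ_lt h⟩ ⟨i + 1, h⟩ else 1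

/-- One step of the right weak order: `v` is obtained from `w` by multiplying on the
right by an adjacent transposition which removes exactly one inversion. -/
def weakStep {n : ℕ} (w v : Equiv.Perm (Fin n)) : Prop :=
  ∃ i : ℕ, i + 1 < n ∧ v = w * adjSwap n i ∧ invCount v + 1 = invCount w

/-- Right weak order: `v ≤_R w` iff `v` is obtained from `w` by a sequence of
inversion-removing right multiplications by adjacent transpositions. -/
def leRW {n : ℕ} (v w : Equiv.Perm (Fin n)) : Prop :=
  Relation.ReflTransGen weakStep w v

end Perm

section Posets

variable {P : Type*}

/-- `c` (an `ℕ`-indexed sequence, constant equal to `y` from index `k` on) is a saturated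
chain `x = c 0 ⋖ c 1 ⋖ ⋯ ⋖ c k = y` of length `k` from `x` to `y`. -/
def IsSatChain [PartialOrder P] (k : ℕ) (c : ℕ → P) (x y : P) : Prop :=
  c 0 = x ∧ (∀ j, k ≤ j → c j = y) ∧ ∀ j, j < k → c j ⋖ c (j + 1)

/-- The chain `c` of length `k` has (weakly) increasing labels. -/
def IncreasingChain [PartialOrder P] (lab : P → P → ℤ) (k : ℕ) (c : ℕ → P) : Prop :=
  ∀ j, j + 1 < k → lab (c j) (c (j + 1)) ≤ lab (c (j + 1)) (c (j + 2))

/-- The label word of length-`k` chain `c` lexicographically strictly precedes that of `d`. -/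
def LexLt [PartialOrder P] (lab : P → P → ℤ) (k : ℕ) (c d : ℕ → P) : Prop :=
  ∃ i < k, (∀ j, j < i → lab (c j) (c (j + 1)) = lab (d j) (d (j + 1))) ∧
    lab (c i) (c (i + 1)) < lab (d i) (d (i + 1))

/-- `lab` is an EL-labeling: in every interval `[x,y]` (containing a saturated chain of
length `k`), there is a unique maximal chain with increasing labels, and it is
lexicographically strictly smaller than every other maximal chain of the interval. -/
def IsELLabeling [PartialOrder P] (lab : P → P → ℤ) : Prop :=
  ∀ x y : P, x < y → ∀ k : ℕ, (∃ c, IsSatChain k c x y) →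
    (∃! c, IsSatChain k c x y ∧ IncreasingChain lab k c) ∧
    ∀ c d, IsSatChain k c x y → IncreasingChain lab k c → IsSatChain k d x y → c ≠ d →
      LexLt lab k c d

/-- `rk` is a rank function making `P` a graded poset of rank `n`, with `rk ⊥ = 0`,
`rk ⊤ = n`, and ranks increasing by one along covers. -/
def IsGraded [PartialOrder P] [BoundedOrder P] (n : ℕ) (rk : P → ℕ) : Prop :=
  rk (⊥ : P) = 0 ∧ rk (⊤ : P) = n ∧ ∀ x y : P, x ⋖ y → rk y = rk x + 1

/-- `lab` is an `S_n` EL-labeling: an EL-labeling such that the label word of every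
maximal chain of `P` is a permutation of `{1, …, n}`. -/
def IsSnELLabeling [PartialOrder P] [BoundedOrder P] (n : ℕ) (lab : P → P → ℤ) : Prop :=
  IsELLabeling lab ∧
    ∀ c : ℕ → P, IsSatChain n c ⊥ ⊤ →
      ∃ σ : Equiv.Perm (Fin n), ∀ j : Fin n, lab (c j) (c ((j : ℕ) + 1)) = ((σ j : ℕ) : ℤ) + 1

/-- The maximal chains of a graded bounded poset of rank `n`. -/
abbrev MaxChain (n : ℕ) (P : Type*) [PartialOrder P] [BoundedOrder P] :=
  {c : ℕ → P // IsSatChain n c ⊥ ⊤}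

/-- The label word of `c` has a descent at position `i` (meaningful for `1 ≤ i ≤ n-1`):
the label of the `i`-th edge exceeds the label of the `(i+1)`-st edge. -/
def DescentAt [PartialOrder P] (lab : P → P → ℤ) (c : ℕ → P) (i : ℕ) : Prop :=
  lab (c i) (c (i + 1)) < lab (c (i - 1)) (c i)

/-- The maximal chain `c` has label word (the permutation) `σ`, where the label of the
`j`-th edge is `σ(j)` (written 1-indexed: the value `(σ j) + 1`). -/
def HasWord [PartialOrder P] (lab : P → P → ℤ) {n : ℕ} (c : ℕ → P)
    (σ : Equiv.Perm (Fin n)) : Prop :=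
  ∀ j : Fin n, lab (c j) (c ((j : ℕ) + 1)) = ((σ j : ℕ) : ℤ) + 1

/-- The defining property of the descent-removing operators `U_i` attached to an
`S_n` EL-labeling: `U i m` agrees with `m` away from rank `i` and has no descent at `i`. -/
def IsUSystem [PartialOrder P] [BoundedOrder P] (n : ℕ) (lab : P → P → ℤ)
    (U : ℕ → MaxChain n P → MaxChain n P) : Prop :=
  ∀ i, 1 ≤ i → i < n → ∀ m : MaxChain n P,
    (∀ j, j ≠ i → (U i m).1 j = m.1 j) ∧ ¬ DescentAt lab (U i m).1 i

/-- `m'` lies in the closure of the maximal chain `m` under the operators `U_i`. -/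
def InClosure [PartialOrder P] [BoundedOrder P] (n : ℕ)
    (U : ℕ → MaxChain n P → MaxChain n P) (m m' : MaxChain n P) : Prop :=
  ∃ l : List ℕ, (∀ i ∈ l, 1 ≤ i ∧ i < n) ∧ List.foldr U m l = m'

/-- `α_P(S)`: the number of chains of `P` whose rank set is exactly `S`. -/
noncomputable def alphaP [PartialOrder P] (rk : P → ℕ) (S : Finset ℕ) : ℕ :=
  Nat.card {t : Finset P // IsChain (· ≤ ·) (t : Set P) ∧ t.image rk = S ∧ t.card = S.card}

/-- The flag `h`-vector `β_P(S) = ∑_{T ⊆ S} (-1)^{|S - T|} α_P(T)`. -/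
noncomputable def betaP [PartialOrder P] (rk : P → ℕ) (S : Finset ℕ) : ℤ :=
  ∑ T ∈ S.powerset, (-1 : ℤ) ^ (S.card - T.card) * (alphaP rk T : ℤ)

/-- `P` is bowtie-free: there are no distinct `a, b, c, d` with `a` and `b` each
covering both `c` and `d`. -/
def BowtieFree (P : Type*) [PartialOrder P] : Prop :=
  ∀ a b c d : P, c ⋖ a → d ⋖ a → c ⋖ b → d ⋖ b → a = b ∨ c = d

/-- The operators `U_i`, `1 ≤ i ≤ n-1`, form a local 0-Hecke action on the maximal
chains: they are local at rank `i`, idempotent, commute at distance `≥ 2`, and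
satisfy the braid relations. -/
def IsLocalHeckeAction [PartialOrder P] [BoundedOrder P] (n : ℕ)
    (U : ℕ → MaxChain n P → MaxChain n P) : Prop :=
  (∀ i, 1 ≤ i → i < n → ∀ m : MaxChain n P, ∀ j, j ≠ i → (U i m).1 j = m.1 j) ∧
  (∀ i, 1 ≤ i → i < n → ∀ m, U i (U i m) = U i m) ∧
  (∀ i j, 1 ≤ i → i < n → 1 ≤ j → j < n → i + 2 ≤ j → ∀ m, U i (U j m) = U j (U i m)) ∧
  (∀ i, 1 ≤ i → i + 1 < n → ∀ m,
    U i (U (i + 1) (U i m)) = U (i + 1) (U i (U (i + 1) m)))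

/-- A good `H_n(0)` action: a local 0-Hecke action on the maximal chains such that for
every `S ⊆ [n-1]`, `α_P(S)` equals the number of maximal chains whose descent set
`{i : U_i m ≠ m}` is contained in `S` (equivalently, `ω F_P = ch χ_P`). -/
def IsGoodHeckeAction [PartialOrder P] [BoundedOrder P] (n : ℕ) (rk : P → ℕ)
    (U : ℕ → MaxChain n P → MaxChain n P) : Prop :=
  IsLocalHeckeAction n U ∧
    ∀ S : Finset ℕ, S ⊆ Finset.Icc 1 (n - 1) →
      alphaP rk S =
        Nat.card {m : MaxChain n P // ∀ i, 1 ≤ i → i < n → U i m ≠ m → i ∈ S}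

/-- An expression `U_{i_1} ⋯ U_{i_r} (m) = m'` (the list `l = [i_1, …, i_r]`, applied
right-to-left) is restless: every single application strictly changes the chain. -/
def Restless [PartialOrder P] [BoundedOrder P] {n : ℕ}
    (U : ℕ → MaxChain n P → MaxChain n P) (l : List ℕ) (m m' : MaxChain n P) : Prop :=
  List.foldr U m l = m' ∧
    ∀ i t, (i :: t) <:+ l → U i (List.foldr U m t) ≠ List.foldr U m t

/-- A subset of a lattice closed under join and meet. -/
def SublClosed [Lattice P] (t : Set P) : Prop :=
  ∀ a ∈ t, ∀ b ∈ t, a ⊔ b ∈ t ∧ a ⊓ b ∈ t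

/-- The sublattice generated by the set `s`. -/
def genSub [Lattice P] (s : Set P) : Set P :=
  ⋂₀ {t : Set P | s ⊆ t ∧ SublClosed t}

/-- The subset `t` is distributive (as a sublattice). -/
def DistribOn [Lattice P] (t : Set P) : Prop :=
  ∀ a ∈ t, ∀ b ∈ t, ∀ c ∈ t, a ⊓ (b ⊔ c) = (a ⊓ b) ⊔ (a ⊓ c)

/-- A lattice (graded, of rank `n`) is supersolvable if it has a maximal chain (an
M-chain) which together with any other chain generates a distributive sublattice. -/
def Supersolvable (n : ℕ) (P : Type*) [Lattice P] [BoundedOrder P] : Prop :=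
  ∃ M : MaxChain n P, ∀ c : Set P, IsChain (· ≤ ·) c →
    DistribOn (genSub (Set.range M.1 ∪ c))

end Posets


lemma mem_invSet {n : ℕ} (v : Equiv.Perm (Fin n)) (a b : Fin n) :
    (a, b) ∈ invSet v ↔ a < b ∧ v.symm b < v.symm a := by
  constructor
  · rintro ⟨i, j, hij, h1, h2, h3⟩
    subst h1; subst h2
    exact ⟨h3, by simpa using hij⟩
  · rintro ⟨h1, h2⟩
    exact ⟨v.symm b, v.symm a, h2, by simp, by simp, by simpa using h1⟩

open Classical in
lemma segment_of_downclosed {n : ℕ} (S : Set (Fin n))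
    (h : ∀ i j : Fin n, i ≤ j → j ∈ S → i ∈ S) (j : Fin n) :
    j ∈ S ↔ (j : ℕ) < (Finset.univ.filter (· ∈ S)).card := by
  constructor
  · intro hj
    have hsub : Finset.Iic j ⊆ Finset.univ.filter (· ∈ S) := by
      intro i hi
      simp only [Finset.mem_Iic] at hi
      simp only [Finset.mem_filter, Finset.mem_univ, true_and]
      exact h i j hi hj
    have := Finset.card_le_card hsub
    rw [Fin.card_Iic] at this
    omega
  · intro hj
    by_contra hjS
    have hsub : Finset.univ.filter (· ∈ S) ⊆ Finset.Iio j := by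
      intro i hi
      simp only [Finset.mem_filter, Finset.mem_univ, true_and] at hi
      simp only [Finset.mem_Iio]
      by_contra hij
      exact hjS (h j i (le_of_not_gt hij) hi)
    have := Finset.card_le_card hsub
    rw [Fin.card_Iio] at this
    omega

/-- For the poset `P_ω` on `[n]` (where `i ⪯ j` iff `i = j`, or `i < j`
and `i` appears before `j` in `ω`), a subset `Λ` is an order ideal iff it is an initial
segment `{ω'(1), …, ω'(k)}` of some permutation `ω'` with `INV(ω') ⊆ INV(ω)`. -/
theorem order_ideal_iff_initial_segment {n : ℕ} (ω : Equiv.Perm (Fin n))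
    (Λ : Set (Fin n)) :
    (∀ i j : Fin n, (i = j ∨ (i < j ∧ ω.symm i < ω.symm j)) → j ∈ Λ → i ∈ Λ) ↔
      ∃ (k : ℕ) (σ : Equiv.Perm (Fin n)), invSet σ ⊆ invSet ω ∧
        Λ = ⇑σ '' {j : Fin n | (j : ℕ) < k} := by
  classical
  constructor
  · intro hΛ
    set f : Fin n → ℕ := fun a => (if a ∈ Λ then 0 else 1) * n + (ω.symm a : ℕ) with hf
    have hfinj : Function.Injective f := by
      intro a b hab
      simp only [hf] at hab
      have ha := (ω.symm a).isLt
      have hb := (ω.symm b).isLt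
      have : ω.symm a = ω.symm b := by
        by_cases h1 : a ∈ Λ <;> by_cases h2 : b ∈ Λ <;> simp [h1, h2] at hab <;>
          (exact Fin.ext (by omega))
      have := congrArg ω this
      simpa using this
    set σ : Equiv.Perm (Fin n) := Tuple.sort f with hσ
    have hmono : StrictMono (f ∘ σ) :=
      (Tuple.monotone_sort f).strictMono_of_injective (hfinj.comp σ.injective)
    set S : Set (Fin n) := {j | σ j ∈ Λ} with hS
    have hSdc : ∀ i j : Fin n, i ≤ j → j ∈ S → i ∈ S := by
      intro i j hij hjS
      rcases eq_or_lt_of_le hij with rfl | hlt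
      · exact hjS
      · have hg := hmono hlt
        simp only [Function.comp_apply, hf] at hg
        have hj : σ j ∈ Λ := hjS
        simp only [hS, Set.mem_setOf_eq]
        by_contra hiΛ
        have hb := (ω.symm (σ j)).isLt
        simp [hiΛ, hj] at hg
        omega
    set k : ℕ := (Finset.univ.filter (· ∈ S)).card with hk
    have hseg := segment_of_downclosed S hSdc
    refine ⟨k, σ, ?_, ?_⟩
    · rintro ⟨a, b⟩ hab
      rw [mem_invSet] at hab ⊢
      obtain ⟨h1, h2⟩ := hab
      refine ⟨h1, ?_⟩
      have hg := hmono h2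
      simp only [Function.comp_apply, Equiv.apply_symm_apply, hf] at hg
      have ha := (ω.symm a).isLt
      have hb := (ω.symm b).isLt
      by_cases haΛ : a ∈ Λ <;> by_cases hbΛ : b ∈ Λ
      · simp only [haΛ, hbΛ, if_pos] at hg
        exact Fin.lt_def.mpr (by omega)
      · simp [haΛ, hbΛ] at hg; omega
      · -- a ∉ Λ, b ∈ Λ : use the ideal property
        rcases lt_trichotomy (ω.symm b) (ω.symm a) with h | h | h
        · exact h
        · exact absurd (ω.symm.injective h) (ne_of_lt h1).symm
        · exact absurd (hΛ a b (Or.inr ⟨h1, h⟩) hbΛ) haΛ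
      · simp only [haΛ, hbΛ, if_neg, not_false_iff] at hg
        exact Fin.lt_def.mpr (by omega)
    · ext x
      constructor
      · intro hx
        refine ⟨σ.symm x, ?_, by simp⟩
        have : σ.symm x ∈ S := by simp [hS, hx]
        exact (hseg _).mp this
      · rintro ⟨j, hj, rfl⟩
        have : j ∈ S := (hseg j).mpr hj
        exact this
  · rintro ⟨k, σ, hinv, rfl⟩ i j hij hj
    rcases hij with rfl | ⟨hlt, hω⟩
    · exact hj
    · obtain ⟨b, hb, rfl⟩ := hj
      have hbk : (b : ℕ) < k := hb
      by_contra hi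
      have hik : ¬ (σ.symm i : ℕ) < k := by
        intro h
        exact hi ⟨σ.symm i, h, by simp⟩
      have hstep : (i, σ b) ∈ invSet σ := by
        rw [mem_invSet]
        refine ⟨hlt, ?_⟩
        simp only [Equiv.symm_apply_apply]
        exact Fin.lt_def.mpr (by omega)
      have := (mem_invSet ω i (σ b)).mp (hinv hstep)
      exact absurd hω (not_lt.mpr (le_of_lt this.2))
end

section
/- Given a permutation ω of [n] and two subsets Λ_u ⊆ Λ_v of [n] such that both Λ_u and Λ_v are initial segments {σ(1),...,σ(k)} of permutations σ with INV(σ) ⊆ INV(ω), there exists a single permutation τ with INV(τ) ⊆ INV(ω) such that Λ_u = {τ(1),...,τ(|Λ_u|)} and Λ_v = {τ(1),...,τ(|Λ_v|)}. -/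
/-
Let `τ` list `Λu`, then `Λv \ Λu`, then the rest, each block increasingly. An inversion `(a, b)`
of `τ` has `a < b` with `b` in an earlier block than `a`, so `b ∈ Λ` and `a ∉ Λ` for `Λ = Λu`
or `Λ = Λv`. Such a pair is an inversion of every permutation having `Λ` as an initial
segment, hence lies in `INV(ω)`.
-/

lemma mem_invSet_iff {n : ℕ} {σ : Equiv.Perm (Fin n)} {a b : Fin n} :
    (a, b) ∈ invSet σ ↔ a < b ∧ σ.symm b < σ.symm a := by
  constructor
  · rintro ⟨i, j, hij, rfl, rfl, hlt⟩
    simpa using ⟨hlt, hij⟩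
  · rintro ⟨hab, hlt⟩
    exact ⟨σ.symm b, σ.symm a, hlt, by simp, by simp, by simpa using hab⟩

lemma mem_invSet_of_mem_image_of_notMem_image {n k : ℕ} {σ : Equiv.Perm (Fin n)} {a b : Fin n}
    (hb : b ∈ σ '' {j | (j : ℕ) < k}) (ha : a ∉ σ '' {j | (j : ℕ) < k}) (hab : a < b) :
    (a, b) ∈ invSet σ := by
  simp only [Equiv.image_eq_preimage_symm, Set.mem_preimage, Set.mem_ofPred_eq, not_lt] at hb ha
  exact mem_invSet_iff.2 ⟨hab, Fin.lt_def.2 (by omega)⟩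

lemma Fin.eq_setOf_lt_ncard_of_isLowerSet {n : ℕ} {D : Set (Fin n)} (hD : IsLowerSet D) :
    D = {j : Fin n | (j : ℕ) < D.ncard} := by
  ext j
  simp only [Set.mem_ofPred_eq]
  constructor
  · intro hj
    have h := Set.ncard_le_ncard (fun i (hi : i ∈ (Finset.Iic j : Set (Fin n))) =>
      hD (Finset.mem_Iic.1 hi) hj)
    rw [Set.ncard_coe_finset, Fin.card_Iic] at h
    omega
  · intro hj
    by_contra hjD
    have h := Set.ncard_le_ncard (t := (Finset.Iio j : Set (Fin n))) fun i hi =>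
      Finset.mem_Iio.2 (lt_of_not_ge fun hji => hjD (hD hji hi))
    rw [Set.ncard_coe_finset, Fin.card_Iio] at h
    omega

namespace Tuple

variable {n : ℕ} {α : Type*} [LinearOrder α] (r : Fin n → α)

lemma strictMono_toLex_sort : StrictMono fun i => toLex (r (sort r i), sort r i) := by
  intro i j hij
  have := (graphEquiv₂ r).strictMono hij
  rwa [graphEquiv₂_apply, graphEquiv₂_apply] at this

lemma lt_of_mem_invSet_sort {a b : Fin n} (h : (a, b) ∈ invSet (sort r)) : r b < r a := by
  obtain ⟨hab, hlt⟩ := mem_invSet_iff.1 h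
  have := strictMono_toLex_sort r hlt
  simp only [Equiv.apply_symm_apply, Prod.Lex.toLex_lt_toLex] at this
  rcases this with hr | ⟨-, hba⟩
  · exact hr
  · exact absurd hab hba.not_gt

lemma eq_image_sort_of_lt {D : Set (Fin n)} (hD : ∀ x ∈ D, ∀ y ∉ D, r x < r y) :
    D = sort r '' {j | (j : ℕ) < D.ncard} := by
  have hlow : IsLowerSet (sort r ⁻¹' D) := fun j i hij hj => by
    by_contra hi
    exact (Prod.Lex.monotone_fst _ _ ((strictMono_toLex_sort r).monotone hij)).not_gt
      (hD _ hj _ hi)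
  have hcard : (sort r ⁻¹' D).ncard = D.ncard :=
    Set.ncard_preimage_of_injective_subset_range (sort r).injective (by simp)
  rw [← hcard, ← Fin.eq_setOf_lt_ncard_of_isLowerSet hlow, Equiv.image_preimage]

end Tuple

section BlockIndex

variable {α : Type*} (U V : Set α)

-- For `U ⊆ V` this is `0` on `U`, `1` on `V \ U` and `2` off `V`; `Tuple.sort` breaks ties by
-- the natural order, so sorting by it lists the three blocks in increasing order.
open Classical in
noncomputable def blockIndex (x : α) : ℕ :=
  (if x ∈ U then 0 else 1) + (if x ∈ V then 0 else 1)

lemma mem_and_notMem_of_blockIndex_lt {a b : α} (h : blockIndex U V b < blockIndex U V a) :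
    (b ∈ U ∧ a ∉ U) ∨ (b ∈ V ∧ a ∉ V) := by
  unfold blockIndex at h
  split_ifs at h <;> tauto

variable {U V}

lemma blockIndex_lt_of_mem_left (hUV : U ⊆ V) {x y : α} (hx : x ∈ U) (hy : y ∉ U) :
    blockIndex U V x < blockIndex U V y := by
  simp [blockIndex, hx, hy, hUV hx]

lemma blockIndex_lt_of_mem_right (hUV : U ⊆ V) {x y : α} (hx : x ∈ V) (hy : y ∉ V) :
    blockIndex U V x < blockIndex U V y := by
  have hyU : y ∉ U := fun h => hy (hUV h)
  unfold blockIndex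
  split_ifs <;> omega

end BlockIndex

/-- If `Λ_u ⊆ Λ_v` are both initial segments of permutations whose
inversion sets are contained in `INV(ω)`, then they are nested initial segments of a
single permutation `τ` with `INV(τ) ⊆ INV(ω)`. -/
theorem nested_initial_segments {n : ℕ} (ω : Equiv.Perm (Fin n))
    (Λu Λv : Set (Fin n)) (hsub : Λu ⊆ Λv)
    (hu : ∃ (k : ℕ) (σ : Equiv.Perm (Fin n)), invSet σ ⊆ invSet ω ∧
      Λu = ⇑σ '' {j : Fin n | (j : ℕ) < k})
    (hv : ∃ (k : ℕ) (σ : Equiv.Perm (Fin n)), invSet σ ⊆ invSet ω ∧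
      Λv = ⇑σ '' {j : Fin n | (j : ℕ) < k}) :
    ∃ τ : Equiv.Perm (Fin n), invSet τ ⊆ invSet ω ∧
      Λu = ⇑τ '' {j : Fin n | (j : ℕ) < Λu.ncard} ∧
      Λv = ⇑τ '' {j : Fin n | (j : ℕ) < Λv.ncard} := by
  obtain ⟨k, σ, hσ, hΛu⟩ := hu
  obtain ⟨l, π, hπ, hΛv⟩ := hv
  refine ⟨Tuple.sort (blockIndex Λu Λv), ?_,
    Tuple.eq_image_sort_of_lt _ fun x hx y hy => blockIndex_lt_of_mem_left hsub hx hy,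
    Tuple.eq_image_sort_of_lt _ fun x hx y hy => blockIndex_lt_of_mem_right hsub hx hy⟩
  rintro ⟨a, b⟩ h
  have hab := (mem_invSet_iff.1 h).1
  rcases mem_and_notMem_of_blockIndex_lt Λu Λv (Tuple.lt_of_mem_invSet_sort _ h) with
    ⟨hb, ha⟩ | ⟨hb, ha⟩
  · rw [hΛu] at hb ha
    exact hσ (mem_invSet_of_mem_image_of_notMem_image hb ha hab)
  · rw [hΛv] at hb ha
    exact hπ (mem_invSet_of_mem_image_of_notMem_image hb ha hab)
end

section
/- Let P be a finite graded poset of rank n with 0̂ and 1̂ having an S_n EL-labeling, with operators U_i as above. Then U_i U_{i+1} U_i = U_{i+1} U_i U_{i+1} for i = 1,...,n−2. -/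
theorem Equiv.Perm.eq_or_swap_of_eq_off_pair {α : Type*} {σ τ : Equiv.Perm α} {a b : α}
    (hab : a ≠ b) (h : ∀ j, j ≠ a → j ≠ b → σ j = τ j) :
    (τ a = σ a ∧ τ b = σ b) ∨ (τ a = σ b ∧ τ b = σ a) := by
  have hmem : ∀ k, k = a ∨ k = b → τ k = σ a ∨ τ k = σ b := by
    rintro k hk
    obtain ⟨j, hj⟩ := σ.surjective (τ k)
    by_cases hja : j = a
    · exact .inl (hja ▸ hj.symm)
    by_cases hjb : j = b
    · exact .inr (hjb ▸ hj.symm)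
    have hjk : j = k := τ.injective ((h j hja hjb).symm.trans hj)
    rcases hk with rfl | rfl <;> contradiction
  have hτ : τ a ≠ τ b := τ.injective.ne hab
  rcases hmem a (.inl rfl) with ha | ha <;> rcases hmem b (.inr rfl) with hb | hb
  · exact absurd (ha.trans hb.symm) hτ
  · exact .inl ⟨ha, hb⟩
  · exact .inr ⟨ha, hb⟩
  · exact absurd (ha.trans hb.symm) hτ

section SortAdj

variable {α : Type*} [LinearOrder α]

def sortAdj (p : ℕ) (w : ℕ → α) (j : ℕ) : α :=
  if j = p then min (w p) (w (p + 1)) else if j = p + 1 then max (w p) (w (p + 1)) else w j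

theorem sortAdj_le_succ (p : ℕ) (w : ℕ → α) : sortAdj p w p ≤ sortAdj p w (p + 1) := by
  simp [sortAdj]

theorem sortAdj_braid (p : ℕ) (w : ℕ → α) :
    sortAdj p (sortAdj (p + 1) (sortAdj p w)) =
      sortAdj (p + 1) (sortAdj p (sortAdj (p + 1) w)) := by
  funext j
  simp only [sortAdj]
  split_ifs <;> grind

end SortAdj

section Chains

variable {P : Type*} [PartialOrder P]

def labelWord (lab : P → P → ℤ) (c : ℕ → P) (j : ℕ) : ℤ :=
  lab (c j) (c (j + 1))

theorem IsSatChain.lt_of_lt {k : ℕ} {c : ℕ → P} {x y : P} (hc : IsSatChain k c x y)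
    {i j : ℕ} (hij : i < j) (hjk : j ≤ k) : c i < c j := by
  induction j with
  | zero => omega
  | succ j ih =>
    have hcov : c j < c (j + 1) := (hc.2.2 j (by omega)).lt
    rcases (by omega : i < j ∨ i = j) with hij | rfl
    · exact (ih hij (by omega)).trans hcov
    · exact hcov

theorem IsSatChain.window {k : ℕ} {c : ℕ → P} {x y : P} (hc : IsSatChain k c x y)
    {p l : ℕ} (hpl : p + l ≤ k) :
    IsSatChain l (fun j => c (p + min j l)) (c p) (c (p + l)) := by
  refine ⟨by simp, fun j hj => by simp [min_eq_right hj], fun j hj => ?_⟩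
  simpa [min_eq_left hj.le, min_eq_left (show j + 1 ≤ l from hj), add_assoc]
    using hc.2.2 (p + j) (by omega)

theorem IsELLabeling.eq_on_window {lab : P → P → ℤ} (hEL : IsELLabeling lab) {k : ℕ}
    {c d : ℕ → P} {x y x' y' : P} (hc : IsSatChain k c x y) (hd : IsSatChain k d x' y')
    {p l : ℕ} (hpl : p + l ≤ k) (hp : c p = d p) (hpl' : c (p + l) = d (p + l))
    (hc_inc : ∀ j, p ≤ j → j + 1 < p + l → labelWord lab c j ≤ labelWord lab c (j + 1))
    (hd_inc : ∀ j, p ≤ j → j + 1 < p + l → labelWord lab d j ≤ labelWord lab d (j + 1))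
    {j : ℕ} (hj : j ≤ l) : c (p + j) = d (p + j) := by
  rcases Nat.eq_zero_or_pos l with rfl | hl
  · obtain rfl : j = 0 := by omega
    exact hp
  have hinc : ∀ e : ℕ → P,
      (∀ j, p ≤ j → j + 1 < p + l → labelWord lab e j ≤ labelWord lab e (j + 1)) →
      IncreasingChain lab l (fun j => e (p + min j l)) := by
    intro e he j hj
    simpa [min_eq_left (show j ≤ l by omega), min_eq_left hj.le,
      min_eq_left (show j + 2 ≤ l from hj), labelWord, add_assoc]
      using he (p + j) (by omega) (by omega)
  have hcw := hc.window hpl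
  have hdw : IsSatChain l (fun j => d (p + min j l)) (c p) (c (p + l)) := by
    rw [hp, hpl']
    exact hd.window hpl
  obtain ⟨hunique, -⟩ := hEL _ _ (hc.lt_of_lt (by omega) hpl) l ⟨_, hcw⟩
  have hwin := congrFun (hunique.unique ⟨hcw, hinc c hc_inc⟩ ⟨hdw, hinc d hd_inc⟩) j
  simpa [min_eq_left hj] using hwin

end Chains

section MaxChains

variable {P : Type*} [PartialOrder P] [BoundedOrder P] {n : ℕ} {lab : P → P → ℤ}

theorem MaxChain.eq_of_eq_off_window (hEL : IsELLabeling lab) {c d : MaxChain n P} {p l : ℕ}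
    (hpl : p + l ≤ n) (hcd : ∀ j, j ≤ p ∨ p + l ≤ j → c.1 j = d.1 j)
    (hc : ∀ j, p ≤ j → j + 1 < p + l → labelWord lab c.1 j ≤ labelWord lab c.1 (j + 1))
    (hd : ∀ j, p ≤ j → j + 1 < p + l → labelWord lab d.1 j ≤ labelWord lab d.1 (j + 1)) :
    c = d := by
  refine Subtype.ext (funext fun j => ?_)
  by_cases hj : p < j ∧ j < p + l
  · obtain ⟨q, rfl⟩ : ∃ q, j = p + q := ⟨j - p, by omega⟩
    exact hEL.eq_on_window c.2 d.2 hpl (hcd p (by omega)) (hcd _ (by omega)) hc hd (by omega)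
  · exact hcd j (by omega)

theorem labelWord_eq_or_swap (hsn : IsSnELLabeling n lab) {p : ℕ} (hp : p + 1 < n)
    {c d : MaxChain n P} (hcd : ∀ j, j ≠ p + 1 → c.1 j = d.1 j) :
    (labelWord lab d.1 p = labelWord lab c.1 p ∧
        labelWord lab d.1 (p + 1) = labelWord lab c.1 (p + 1)) ∨
      (labelWord lab d.1 p = labelWord lab c.1 (p + 1) ∧
        labelWord lab d.1 (p + 1) = labelWord lab c.1 p) := by
  obtain ⟨σ, hσ⟩ := hsn.2 c.1 c.2
  obtain ⟨τ, hτ⟩ := hsn.2 d.1 d.2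
  let a : Fin n := ⟨p, by omega⟩
  let b : Fin n := ⟨p + 1, hp⟩
  have hσa : labelWord lab c.1 p = (σ a : ℕ) + 1 := hσ a
  have hσb : labelWord lab c.1 (p + 1) = (σ b : ℕ) + 1 := hσ b
  have hτa : labelWord lab d.1 p = (τ a : ℕ) + 1 := hτ a
  have hτb : labelWord lab d.1 (p + 1) = (τ b : ℕ) + 1 := hτ b
  have hab : a ≠ b := by simp [a, b, Fin.ext_iff]
  have hστ : ∀ j, j ≠ a → j ≠ b → σ j = τ j := by
    intro j hja hjb
    have hj : labelWord lab c.1 j = labelWord lab d.1 j := by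
      rw [labelWord, labelWord, hcd j (fun h => hjb (Fin.ext h)),
        hcd (j + 1) (fun h => hja (Fin.ext (Nat.add_right_cancel h)))]
    have := (hσ j).symm.trans (hj.trans (hτ j))
    exact Fin.ext (by omega)
  rcases Equiv.Perm.eq_or_swap_of_eq_off_pair hab hστ with ⟨ha, hb⟩ | ⟨ha, hb⟩
  · exact .inl ⟨by rw [hτa, hσa, ha], by rw [hτb, hσb, hb]⟩
  · exact .inr ⟨by rw [hτa, hσb, ha], by rw [hτb, hσa, hb]⟩

theorem labelWord_U_succ (hsn : IsSnELLabeling n lab) {U : ℕ → MaxChain n P → MaxChain n P}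
    (hU : IsUSystem n lab U) {p : ℕ} (hp : p + 1 < n) (m : MaxChain n P) :
    labelWord lab (U (p + 1) m).1 = sortAdj p (labelWord lab m.1) := by
  obtain ⟨hoff, hasc⟩ := hU (p + 1) (by omega) hp m
  have hle : labelWord lab (U (p + 1) m).1 p ≤ labelWord lab (U (p + 1) m).1 (p + 1) := by
    simpa [DescentAt, labelWord] using hasc
  have hpair := labelWord_eq_or_swap hsn hp (fun j hj => (hoff j hj).symm)
  funext j
  rcases (show j = p ∨ j = p + 1 ∨ (j ≠ p ∧ j ≠ p + 1) by omega)
    with rfl | rfl | ⟨hj, hj'⟩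
  · rw [sortAdj, if_pos rfl]
    omega
  · rw [sortAdj, if_neg (by omega), if_pos rfl]
    omega
  · rw [sortAdj, if_neg hj, if_neg hj', labelWord, labelWord, hoff j (by omega),
      hoff (j + 1) (by omega)]

end MaxChains

theorem U_braid_general {P : Type*} [PartialOrder P] [BoundedOrder P]
    {n : ℕ} (lab : P → P → ℤ) (hsn : IsSnELLabeling n lab)
    (U : ℕ → MaxChain n P → MaxChain n P) (hU : IsUSystem n lab U) :
    ∀ i, 1 ≤ i → i + 1 < n → ∀ m : MaxChain n P,
      U i (U (i + 1) (U i m)) = U (i + 1) (U i (U (i + 1) m)) := by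
  intro i hi hin m
  obtain ⟨p, rfl⟩ : ∃ p, i = p + 1 := ⟨i - 1, by omega⟩
  have hword : ∀ q, q ≤ p + 1 → ∀ m : MaxChain n P,
      labelWord lab (U (q + 1) m).1 = sortAdj q (labelWord lab m.1) :=
    fun q hq => labelWord_U_succ hsn hU (by omega)
  have hoff : ∀ q, q ≤ p + 1 → ∀ (m : MaxChain n P) j, j ≠ q + 1 →
      (U (q + 1) m).1 j = m.1 j :=
    fun q hq m => (hU (q + 1) (by omega) (by omega) m).1
  set L := U (p + 1) (U (p + 1 + 1) (U (p + 1) m))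
  set R := U (p + 1 + 1) (U (p + 1) (U (p + 1 + 1) m))
  have hLR : labelWord lab L.1 = labelWord lab R.1 := by
    simp only [L, R, hword p le_self_add, hword (p + 1) le_rfl, sortAdj_braid]
  have hL : ∀ j, p ≤ j → j + 1 < p + 3 →
      labelWord lab L.1 j ≤ labelWord lab L.1 (j + 1) := by
    intro j hj hj'
    rcases (show j = p ∨ j = p + 1 by omega) with h | h <;> subst j
    · rw [hword p le_self_add]
      exact sortAdj_le_succ _ _
    · rw [hLR, hword (p + 1) le_rfl]
      exact sortAdj_le_succ _ _
  refine MaxChain.eq_of_eq_off_window hsn.1 (p := p) (l := 3) (by omega) (fun j hj => ?_) hL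
    (hLR ▸ hL)
  simp only [L, R, hoff p le_self_add _ j (by omega), hoff (p + 1) le_rfl _ j (by omega)]

/-- The descent-removing operators `U_i` on the maximal chains of an
`S_n` EL-labeled finite graded poset satisfy the braid relations
`U_i U_{i+1} U_i = U_{i+1} U_i U_{i+1}`. -/
theorem U_braid {P : Type*} [PartialOrder P] [BoundedOrder P] [Fintype P]
    {n : ℕ} (rk : P → ℕ) (hg : IsGraded n rk)
    (lab : P → P → ℤ) (hsn : IsSnELLabeling n lab)
    (U : ℕ → MaxChain n P → MaxChain n P) (hU : IsUSystem n lab U) :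
    ∀ i, 1 ≤ i → i + 1 < n → ∀ m : MaxChain n P,
      U i (U (i + 1) (U i m)) = U (i + 1) (U i (U (i + 1) m)) :=
  U_braid_general lab hsn U hU
end

section
/- Let P be a finite graded poset of rank n with 0̂ and 1̂ and an S_n EL-labeling. Then for every subset S of [n−1], the flag h-vector value β_P(S) equals the number of maximal chains of P whose label permutation has descent set exactly S. -/
section Basic
variable {P : Type*} [PartialOrder P]


-- exists cover below y
lemma exists_cover_le [Fintype P] {x y : P} (h : x < y) : ∃ z, x ⋖ z ∧ z ≤ y := by
  classical
  obtain ⟨z, hz, hmin⟩ := Finset.exists_minimal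
    (s := Finset.univ.filter (fun z => x < z ∧ z ≤ y)) ⟨y, by simp [h, le_refl]⟩
  simp only [Finset.mem_filter, Finset.mem_univ, true_and] at hz hmin
  exact ⟨z, ⟨hz.1, fun w hxw hwz => hwz.not_ge (hmin ⟨hxw, hwz.le.trans hz.2⟩ hwz.le)⟩, hz.2⟩

lemma exists_satChain [Fintype P] {x y : P} (h : x ≤ y) : ∃ k c, IsSatChain k c x y := by
  classical
  rcases eq_or_lt_of_le h with rfl | hlt
  · exact ⟨0, fun _ => x, rfl, fun j _ => rfl, fun j hj => absurd hj (Nat.not_lt_zero j)⟩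
  · -- strong induction on ncard of (x, y]
    have H : ∀ N : ℕ, ∀ x : P, x < y → {w | x < w ∧ w ≤ y}.ncard ≤ N →
        ∃ k c, IsSatChain k c x y := by
      intro N
      induction N with
      | zero =>
        intro x hx hN
        exfalso
        have : y ∈ {w | x < w ∧ w ≤ y} := ⟨hx, le_rfl⟩
        have hfin : {w : P | x < w ∧ w ≤ y}.Finite := Set.toFinite _
        have := Set.ncard_pos (s := {w | x < w ∧ w ≤ y}) hfin |>.mpr ⟨y, this⟩
        omega
      | succ N ih =>
        intro x hx hN
        obtain ⟨z, hcov, hzy⟩ := exists_cover_le hx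
        rcases eq_or_lt_of_le hzy with rfl | hzy'
        · refine ⟨1, fun j => if j = 0 then x else z, by simp, ?_, ?_⟩
          · intro j hj
            have : j ≠ 0 := by omega
            simp [this]
          · intro j hj
            interval_cases j
            simpa using hcov
        · have hsub : {w | z < w ∧ w ≤ y} ⊂ {w | x < w ∧ w ≤ y} := by
            constructor
            · intro w hw; exact ⟨hcov.lt.trans hw.1, hw.2⟩
            · intro hcon
              have : z ∈ {w | z < w ∧ w ≤ y} := hcon ⟨hcov.lt, hzy⟩
              exact lt_irrefl z this.1
          have hcard : {w | z < w ∧ w ≤ y}.ncard < {w | x < w ∧ w ≤ y}.ncard :=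
            Set.ncard_lt_ncard hsub (Set.toFinite _)
          obtain ⟨k, c, hc⟩ := ih z hzy' (by omega)
          refine ⟨k + 1, fun j => if j = 0 then x else c (j - 1), by simp, ?_, ?_⟩
          · intro j hj
            have : j ≠ 0 := by omega
            simp only [this, if_false]
            exact hc.2.1 _ (by omega)
          · intro j hj
            rcases Nat.eq_zero_or_pos j with rfl | hj0
            · simpa [hc.1] using hcov
            · have h1 : j ≠ 0 := by omega
              have h2 : j + 1 ≠ 0 := by omega
              simp only [h1, h2, if_false]
              have h3 : j + 1 - 1 = j - 1 + 1 := by omega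
              rw [h3]
              exact hc.2.2 _ (by omega)
    exact H _ x hlt le_rfl

lemma satChain_mono {k : ℕ} {c : ℕ → P} {x y : P} (hc : IsSatChain k c x y) :
    ∀ i j, i ≤ j → c i ≤ c j := by
  have step : ∀ i, c i ≤ c (i + 1) := by
    intro i
    rcases lt_or_ge i k with h | h
    · exact (hc.2.2 i h).le
    · rw [hc.2.1 i h, hc.2.1 (i+1) (by omega)]
  intro i j hij
  induction j, hij using Nat.le_induction with
  | base => exact le_rfl
  | succ j hj ih => exact ih.trans (step j)

variable {n : ℕ} {rk : P → ℕ}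

lemma satChain_rank [BoundedOrder P] (hg : IsGraded n rk) {k : ℕ} {c : ℕ → P} {x y : P}
    (hc : IsSatChain k c x y) : ∀ j, j ≤ k → rk (c j) = rk x + j := by
  intro j hj
  induction j with
  | zero => rw [hc.1]; omega
  | succ j ih =>
    rw [hg.2.2 _ _ (hc.2.2 j (by omega)), ih (by omega)]; omega

lemma satChain_len [BoundedOrder P] (hg : IsGraded n rk) {k : ℕ} {c : ℕ → P} {x y : P}
    (hc : IsSatChain k c x y) : rk y = rk x + k := by
  have := satChain_rank hg hc k le_rfl
  rwa [hc.2.1 k le_rfl] at this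

lemma rk_mono [Fintype P] [BoundedOrder P] (hg : IsGraded n rk) {x y : P} (h : x ≤ y) :
    rk x ≤ rk y := by
  obtain ⟨k, c, hc⟩ := exists_satChain h
  rw [satChain_len hg hc]; omega

lemma rk_strict_mono [Fintype P] [BoundedOrder P] (hg : IsGraded n rk) {x y : P} (h : x < y) :
    rk x < rk y := by
  obtain ⟨k, c, hc⟩ := exists_satChain h.le
  rcases Nat.eq_zero_or_pos k with rfl | hk
  · exact absurd (hc.1 ▸ hc.2.1 0 le_rfl : x = y) h.ne
  · rw [satChain_len hg hc]; omega

lemma exists_satChain_len [Fintype P] [BoundedOrder P] (hg : IsGraded n rk) {x y : P}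
    (h : x ≤ y) : ∃ c, IsSatChain (rk y - rk x) c x y := by
  obtain ⟨k, c, hc⟩ := exists_satChain h
  have := satChain_len hg hc
  have : rk y - rk x = k := by omega
  exact this ▸ ⟨c, hc⟩

lemma bot_eq_top_of_rank_zero [Fintype P] [BoundedOrder P] (hg : IsGraded n rk) (hn : n = 0) :
    (⊥ : P) = ⊤ := by
  by_contra hne
  have h : (⊥ : P) < ⊤ := lt_of_le_of_ne bot_le hne
  have := rk_strict_mono hg h
  rw [hg.1, hg.2.1] at this
  omega

end Basic

section IncChain

variable {P : Type*} [PartialOrder P] [BoundedOrder P] [Fintype P]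
variable {n : ℕ} (rk : P → ℕ) (lab : P → P → ℤ)

open Classical in
/-- The unique increasing saturated chain in `[x,y]` (junk `fun _ => y` if `¬ x < y`). -/
noncomputable def incChain (x y : P) : ℕ → P :=
  if h : (x < y) ∧ IsELLabeling lab ∧ IsGraded n rk then
    ((h.2.1 x y h.1 (rk y - rk x) (exists_satChain_len h.2.2 h.1.le)).1).exists.choose
  else fun _ => y

variable {rk lab}

lemma incChain_spec (hg : IsGraded n rk) (hel : IsELLabeling lab) {x y : P} (hxy : x < y) :
    IsSatChain (rk y - rk x) (incChain (n := n) rk lab x y) x y ∧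
      IncreasingChain lab (rk y - rk x) (incChain (n := n) rk lab x y) := by
  rw [incChain, dif_pos ⟨hxy, hel, hg⟩]
  exact ((hel x y hxy (rk y - rk x) (exists_satChain_len hg hxy.le)).1).exists.choose_spec

lemma incChain_unique (hg : IsGraded n rk) (hel : IsELLabeling lab) {x y : P} (hxy : x < y)
    {k : ℕ} {c : ℕ → P} (hc : IsSatChain k c x y) (hinc : IncreasingChain lab k c) :
    c = incChain (n := n) rk lab x y := by
  have hk : k = rk y - rk x := by have := satChain_len hg hc; omega
  subst hk
  have h := hel x y hxy (rk y - rk x) ⟨c, hc⟩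
  exact h.1.unique ⟨hc, hinc⟩ ⟨(incChain_spec hg hel hxy).1, (incChain_spec hg hel hxy).2⟩

end IncChain

section Anchors

variable (n : ℕ) (T : Finset ℕ)

/-- The anchor set `T ∪ {0, n}`. -/
def ancs : Finset ℕ := insert 0 (insert n T)

noncomputable def prevA (i : ℕ) : ℕ :=
  ((ancs n T).filter (· ≤ i)).max' ⟨0, by simp [ancs]⟩

noncomputable def nextA (i : ℕ) : ℕ :=
  if h : ((ancs n T).filter (i ≤ ·)).Nonempty then ((ancs n T).filter (i ≤ ·)).min' h else n

variable {n T}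

lemma mem_ancs_of_mem (hT : T ⊆ Finset.Icc 1 (n - 1)) {a : ℕ} (ha : a ∈ T) : a ∈ ancs n T := by
  simp [ancs, ha]

lemma ancs_le_n (hT : T ⊆ Finset.Icc 1 (n - 1)) {a : ℕ} (ha : a ∈ ancs n T) : a ≤ n := by
  simp only [ancs, Finset.mem_insert] at ha
  rcases ha with rfl | rfl | h
  · omega
  · exact le_rfl
  · have := Finset.mem_Icc.mp (hT h); omega

lemma prevA_mem (i : ℕ) : prevA n T i ∈ ancs n T := by
  have h := Finset.max'_mem ((ancs n T).filter (· ≤ i)) ⟨0, by simp [ancs]⟩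
  rw [Finset.mem_filter] at h
  exact h.1

lemma prevA_le (i : ℕ) : prevA n T i ≤ i := by
  have h := Finset.max'_mem ((ancs n T).filter (· ≤ i)) ⟨0, by simp [ancs]⟩
  rw [Finset.mem_filter] at h
  exact h.2

lemma le_prevA {a i : ℕ} (ha : a ∈ ancs n T) (hai : a ≤ i) : a ≤ prevA n T i := by
  unfold prevA
  exact Finset.le_max' ((ancs n T).filter (· ≤ i)) a (Finset.mem_filter.mpr ⟨ha, hai⟩)

lemma nextA_mem (hT : T ⊆ Finset.Icc 1 (n - 1)) {i : ℕ} (hi : i ≤ n) :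
    nextA n T i ∈ ancs n T := by
  rw [nextA, dif_pos ⟨n, Finset.mem_filter.mpr ⟨by simp [ancs], hi⟩⟩]
  exact (Finset.mem_filter.mp (Finset.min'_mem _ _)).1

lemma le_nextA (hT : T ⊆ Finset.Icc 1 (n - 1)) {i : ℕ} (hi : i ≤ n) : i ≤ nextA n T i := by
  rw [nextA, dif_pos ⟨n, Finset.mem_filter.mpr ⟨by simp [ancs], hi⟩⟩]
  exact (Finset.mem_filter.mp (Finset.min'_mem _ _)).2

lemma nextA_le {a i : ℕ} (ha : a ∈ ancs n T) (hai : i ≤ a) : nextA n T i ≤ a := by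
  rw [nextA, dif_pos ⟨a, Finset.mem_filter.mpr ⟨ha, hai⟩⟩]
  exact Finset.min'_le _ _ (Finset.mem_filter.mpr ⟨ha, hai⟩)

end Anchors

section Segment

variable {P : Type*} [PartialOrder P] [BoundedOrder P] [Fintype P]
variable {n : ℕ} {rk : P → ℕ} {lab : P → P → ℤ} {T : Finset ℕ}

/-- Rank along a maximal chain. -/
lemma maxchain_rank (hg : IsGraded n rk) {m : ℕ → P} (hm : IsSatChain n m ⊥ ⊤)
    {j : ℕ} (hj : j ≤ n) : rk (m j) = j := by
  have := satChain_rank hg hm j hj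
  rwa [hg.1, Nat.zero_add] at this

/-- On a gap between consecutive anchors, a maximal chain whose descents lie in `T`
agrees with the unique increasing chain of the corresponding interval. -/
lemma segment_eq_incChain (hg : IsGraded n rk) (hel : IsELLabeling lab)
    {m : ℕ → P} (hm : IsSatChain n m ⊥ ⊤)
    (hdes : ∀ i, 1 ≤ i → i < n → DescentAt lab m i → i ∈ T)
    {a b : ℕ} (hab : a < b) (hbn : b ≤ n)
    (hgap : ∀ c ∈ T, ¬(a < c ∧ c < b)) :
    ∀ j, a ≤ j → j ≤ b → m j = incChain (n := n) rk lab (m a) (m b) (j - a) := by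
  have hmono := satChain_mono hm
  have hlt : m a < m b := by
    have h1 : m a ≤ m b := hmono a b hab.le
    have h2 : rk (m a) = a := maxchain_rank hg hm (by omega)
    have h3 : rk (m b) = b := maxchain_rank hg hm hbn
    rcases eq_or_lt_of_le h1 with h | h
    · exfalso; rw [h] at h2; omega
    · exact h
  set c : ℕ → P := fun t => m (min (a + t) b) with hc
  have hsat : IsSatChain (b - a) c (m a) (m b) := by
    refine ⟨?_, ?_, ?_⟩
    · show m (min (a + 0) b) = m a
      rw [Nat.add_zero, min_eq_left hab.le]
    · intro j hj
      show m (min (a + j) b) = m b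
      have : min (a + j) b = b := by omega
      rw [this]
    · intro j hj
      have h1 : min (a + j) b = a + j := by omega
      have h2 : min (a + (j + 1)) b = a + (j + 1) := by omega
      simp only [hc, h1, h2]
      exact hm.2.2 (a + j) (by omega)
  have hinc : IncreasingChain lab (b - a) c := by
    intro j hj
    have h1 : min (a + j) b = a + j := by omega
    have h2 : min (a + (j + 1)) b = a + (j + 1) := by omega
    have h3 : min (a + (j + 2)) b = a + (j + 2) := by omega
    simp only [hc, h1, h2, h3]
    have hnd : ¬ DescentAt lab m (a + (j + 1)) := by
      intro hd
      exact hgap (a + (j + 1)) (hdes (a + (j + 1)) (by omega) (by omega) hd)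
        ⟨by omega, by omega⟩
    rw [DescentAt, not_lt] at hnd
    have e1 : a + (j + 1) - 1 = a + j := by omega
    have e2 : a + (j + 1) + 1 = a + (j + 2) := by omega
    rw [e1, e2] at hnd
    exact hnd
  have := incChain_unique hg hel hlt hsat hinc
  intro j haj hjb
  have : c (j - a) = incChain (n := n) rk lab (m a) (m b) (j - a) := by rw [this]
  rw [← this]
  simp only [hc]
  congr 1
  omega

/-- Two maximal chains with descents inside `T` agreeing on all anchors are equal. -/
lemma chains_eq_of_agree (hg : IsGraded n rk) (hel : IsELLabeling lab)
    (hT : T ⊆ Finset.Icc 1 (n - 1))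
    {m m' : ℕ → P} (hm : IsSatChain n m ⊥ ⊤) (hm' : IsSatChain n m' ⊥ ⊤)
    (hdes : ∀ i, 1 ≤ i → i < n → DescentAt lab m i → i ∈ T)
    (hdes' : ∀ i, 1 ≤ i → i < n → DescentAt lab m' i → i ∈ T)
    (hag : ∀ a ∈ ancs n T, m a = m' a) : m = m' := by
  funext i
  rcases le_or_gt n i with hi | hi
  · rw [hm.2.1 i hi, hm'.2.1 i hi]
  by_cases hiA : i ∈ ancs n T
  · exact hag i hiA
  · set a := prevA n T i with hadef
    set b := nextA n T i with hbdef
    have hamem := prevA_mem (n := n) (T := T) i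
    have hale : a ≤ i := prevA_le i
    have hbmem := nextA_mem hT (le_of_lt hi)
    have hble : i ≤ b := le_nextA hT (le_of_lt hi)
    have hbn : b ≤ n := ancs_le_n hT hbmem
    have hai : a < i := lt_of_le_of_ne hale (fun h => hiA (h ▸ hamem))
    have hib : i < b := lt_of_le_of_ne hble (fun h => hiA (h ▸ hbmem))
    have hgap : ∀ c ∈ T, ¬(a < c ∧ c < b) := by
      intro c hcT ⟨hac, hcb⟩
      have hcA : c ∈ ancs n T := mem_ancs_of_mem hT hcT
      rcases le_or_gt c i with h | h
      · exact absurd (le_prevA hcA h) (by omega)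
      · exact absurd (nextA_le hcA h.le) (by omega)
    have e1 := segment_eq_incChain hg hel hm hdes (lt_trans hai hib) hbn hgap i hale hble
    have e2 := segment_eq_incChain hg hel hm' hdes' (lt_trans hai hib) hbn hgap i hale hble
    rw [e1, e2, hag a hamem, hag b hbmem]

end Segment

section Build

variable {P : Type*} [PartialOrder P] [BoundedOrder P] [Fintype P]
variable {n : ℕ} {rk : P → ℕ} {lab : P → P → ℤ} {T : Finset ℕ}

open Classical in
/-- The element of the chain `t` of rank `a` (with `⊤` at `a = n`, `⊥` junk). -/
noncomputable def anchorPt (rk : P → ℕ) (t : Finset P) (n a : ℕ) : P :=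
  if a = n then ⊤ else if h : ∃ x ∈ t, rk x = a then h.choose else ⊥

variable {t : Finset P}

lemma anchorPt_top : anchorPt rk t n n = ⊤ := by
  rw [anchorPt, if_pos rfl]

section PtLemmas

variable (hT : T ⊆ Finset.Icc 1 (n - 1)) (himg : t.image rk = T)

include himg in
lemma anchorPt_mem_rank (hT : T ⊆ Finset.Icc 1 (n - 1)) {a : ℕ} (ha : a ∈ T) :
    anchorPt rk t n a ∈ t ∧ rk (anchorPt rk t n a) = a := by
  have han : a ≠ n := by have := Finset.mem_Icc.mp (hT ha); omega
  have hex : ∃ x ∈ t, rk x = a := by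
    rw [← himg] at ha
    obtain ⟨x, hx, hrx⟩ := Finset.mem_image.mp ha
    exact ⟨x, hx, hrx⟩
  rw [anchorPt, if_neg han, dif_pos hex]
  exact ⟨hex.choose_spec.1, hex.choose_spec.2⟩

include himg in
lemma anchorPt_rank (hg : IsGraded n rk) (hT : T ⊆ Finset.Icc 1 (n - 1))
    {a : ℕ} (ha : a ∈ ancs n T) : rk (anchorPt rk t n a) = a := by
  rcases eq_or_ne a n with rfl | han
  · rw [anchorPt, if_pos rfl]; exact hg.2.1
  simp only [ancs, Finset.mem_insert] at ha
  rcases ha with rfl | rfl | ha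
  · have hex : ¬ ∃ x ∈ t, rk x = 0 := by
      rintro ⟨x, hx, hrx⟩
      have : (0 : ℕ) ∈ T := himg ▸ Finset.mem_image.mpr ⟨x, hx, hrx⟩
      have := Finset.mem_Icc.mp (hT this); omega
    rw [anchorPt, if_neg han, dif_neg hex]
    exact hg.1
  · exact absurd rfl han
  · exact (anchorPt_mem_rank himg hT ha).2

include himg in
lemma anchorPt_lt (hg : IsGraded n rk) (hT : T ⊆ Finset.Icc 1 (n - 1))
    (ht : IsChain (· ≤ ·) (t : Set P)) {a b : ℕ} (ha : a ∈ ancs n T) (hb : b ∈ ancs n T)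
    (hab : a < b) : anchorPt rk t n a < anchorPt rk t n b := by
  have hra := anchorPt_rank himg hg hT ha
  have hrb := anchorPt_rank himg hg hT hb
  have hne : anchorPt rk t n a ≠ anchorPt rk t n b := by
    intro h; rw [h] at hra; omega
  have hle : anchorPt rk t n a ≤ anchorPt rk t n b := by
    rcases eq_or_ne b n with rfl | hbn
    · rw [anchorPt_top]; exact le_top
    have hbT : b ∈ T := by
      simp only [ancs, Finset.mem_insert] at hb
      rcases hb with rfl | rfl | h
      · omega
      · exact absurd rfl hbn
      · exact h
    rcases eq_or_ne a n with rfl | han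
    · exfalso; exact absurd (ancs_le_n hT hb) (by omega)
    by_cases haT : a ∈ T
    · have hma := anchorPt_mem_rank himg hT haT
      have hmb := anchorPt_mem_rank himg hT hbT
      rcases ht hma.1 hmb.1 hne with h | h
      · exact h
      · exfalso
        have := rk_mono hg h
        omega
    · have hex : ¬ ∃ x ∈ t, rk x = a := by
        rintro ⟨x, hx, hrx⟩
        exact haT (himg ▸ Finset.mem_image.mpr ⟨x, hx, hrx⟩)
      rw [anchorPt, if_neg han, dif_neg hex]
      exact bot_le
  exact lt_of_le_of_ne hle hne

end PtLemmas

/-- The maximal chain built from a chain with rank set `T` by filling gaps with the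
unique increasing chains. -/
noncomputable def buildC (rk : P → ℕ) (lab : P → P → ℤ) (T : Finset ℕ) (t : Finset P)
    (n : ℕ) : ℕ → P := fun i =>
  if n ≤ i then ⊤
  else if i ∈ ancs n T then anchorPt rk t n i
  else incChain (n := n) rk lab (anchorPt rk t n (prevA n T i))
    (anchorPt rk t n (nextA n T i)) (i - prevA n T i)

variable (hg : IsGraded n rk) (hel : IsELLabeling lab) (hT : T ⊆ Finset.Icc 1 (n - 1))
  (himg : t.image rk = T) (ht : IsChain (· ≤ ·) (t : Set P))

include hg hel hT himg ht in
lemma buildC_seg {a b : ℕ} (ha : a ∈ ancs n T) (hb : b ∈ ancs n T) (hab : a < b)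
    (hgap : ∀ c ∈ ancs n T, ¬(a < c ∧ c < b)) :
    ∀ j, a ≤ j → j ≤ b →
      buildC rk lab T t n j =
        incChain (n := n) rk lab (anchorPt rk t n a) (anchorPt rk t n b) (j - a) := by
  have hbn : b ≤ n := ancs_le_n hT hb
  have hpab := anchorPt_lt himg hg hT ht ha hb hab
  have hlen : rk (anchorPt rk t n b) - rk (anchorPt rk t n a) = b - a := by
    rw [anchorPt_rank himg hg hT ha, anchorPt_rank himg hg hT hb]
  have hspec := incChain_spec (rk := rk) (lab := lab) hg hel hpab
  intro j haj hjb
  rcases eq_or_lt_of_le haj with rfl | haj'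
  · rw [buildC, if_neg (by omega), if_pos ha, Nat.sub_self]
    exact (hspec.1.1).symm
  rcases eq_or_lt_of_le hjb with heq | hjb'
  · subst heq
    have hend : incChain (n := n) rk lab (anchorPt rk t n a) (anchorPt rk t n j) (j - a) =
        anchorPt rk t n j := hspec.1.2.1 (j - a) (by rw [hlen])
    rw [hend, buildC]
    rcases eq_or_lt_of_le hbn with heq2 | hjn
    · subst heq2
      rw [if_pos le_rfl, anchorPt_top]
    · rw [if_neg (by omega), if_pos hb]
  · have hjA : j ∉ ancs n T := fun h => hgap j h ⟨haj', hjb'⟩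
    have hprev : prevA n T j = a := by
      have h1 := prevA_mem (n := n) (T := T) j
      have h2 := prevA_le (n := n) (T := T) j
      have h3 := le_prevA ha haj'.le
      rcases eq_or_lt_of_le h3 with h | h
      · exact h.symm
      · exfalso
        rcases eq_or_lt_of_le h2 with h' | h'
        · exact hjA (h' ▸ h1)
        · exact hgap _ h1 ⟨h, by omega⟩
    have hnext : nextA n T j = b := by
      have h1 := nextA_mem hT (show j ≤ n by omega)
      have h2 := le_nextA hT (show j ≤ n by omega)
      have h3 := nextA_le hb hjb'.le
      rcases eq_or_lt_of_le h3 with h | h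
      · exact h
      · exfalso
        rcases eq_or_lt_of_le h2 with h' | h'
        · exact hjA (h' ▸ h1)
        · exact hgap _ h1 ⟨by omega, h⟩
    rw [buildC, if_neg (by omega), if_neg hjA, hprev, hnext]

include hg hel hT himg ht in
lemma buildC_isSat : IsSatChain n (buildC rk lab T t n) ⊥ ⊤ := by
  refine ⟨?_, ?_, ?_⟩
  · rcases Nat.eq_zero_or_pos n with rfl | hn
    · rw [buildC, if_pos le_rfl]
      exact (bot_eq_top_of_rank_zero hg rfl).symm
    · rw [buildC, if_neg (by omega), if_pos (by simp [ancs]), anchorPt, if_neg (by omega)]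
      rw [dif_neg]
      rintro ⟨x, hx, hrx⟩
      have : (0 : ℕ) ∈ T := himg ▸ Finset.mem_image.mpr ⟨x, hx, hrx⟩
      have := Finset.mem_Icc.mp (hT this); omega
  · intro j hj
    rw [buildC, if_pos hj]
  · intro j hj
    set a := prevA n T j with hadef
    set b := nextA n T (j + 1) with hbdef
    have ha := prevA_mem (n := n) (T := T) j
    have hale := prevA_le (n := n) (T := T) j
    have hb := nextA_mem hT (show j + 1 ≤ n by omega)
    have hble := le_nextA hT (show j + 1 ≤ n by omega)
    have hbn : b ≤ n := ancs_le_n hT hb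
    have hab : a < b := by omega
    have hgap : ∀ c ∈ ancs n T, ¬(a < c ∧ c < b) := by
      rintro c hc ⟨h1, h2⟩
      rcases le_or_gt c j with h | h
      · have := le_prevA hc h
        rw [← hadef] at this
        omega
      · have := nextA_le hc (show j + 1 ≤ c by omega)
        rw [← hbdef] at this
        omega
    have e1 := buildC_seg hg hel hT himg ht ha hb hab hgap j hale (by omega)
    have e2 := buildC_seg hg hel hT himg ht ha hb hab hgap (j + 1) (by omega) (by omega)
    rw [e1, e2]
    have hpab := anchorPt_lt himg hg hT ht ha hb hab
    have hlen : rk (anchorPt rk t n b) - rk (anchorPt rk t n a) = b - a := by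
      rw [anchorPt_rank himg hg hT ha, anchorPt_rank himg hg hT hb]
    have hspec := incChain_spec (rk := rk) (lab := lab) hg hel hpab
    have e3 : j + 1 - a = (j - a) + 1 := by omega
    rw [e3]
    exact hspec.1.2.2 (j - a) (by rw [hlen]; omega)

include hg hel hT himg ht in
lemma buildC_desc : ∀ i, 1 ≤ i → i < n → DescentAt lab (buildC rk lab T t n) i → i ∈ T := by
  intro i h1 h2 hd
  by_contra hiT
  have hiA : i ∉ ancs n T := by
    simp only [ancs, Finset.mem_insert]
    push_neg
    exact ⟨by omega, by omega, hiT⟩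
  set a := prevA n T i with hadef
  set b := nextA n T i with hbdef
  have ha := prevA_mem (n := n) (T := T) i
  have hale := prevA_le (n := n) (T := T) i
  have hb := nextA_mem hT (show i ≤ n by omega)
  have hble := le_nextA hT (show i ≤ n by omega)
  have hbn : b ≤ n := ancs_le_n hT hb
  have hai : a < i := lt_of_le_of_ne hale (fun h => hiA (h ▸ ha))
  have hib : i < b := lt_of_le_of_ne hble (fun h => hiA (h ▸ hb))
  have hgap : ∀ c ∈ ancs n T, ¬(a < c ∧ c < b) := by
    rintro c hc ⟨hh1, hh2⟩
    rcases le_or_gt c i with h | h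
    · have := le_prevA hc h
      rw [← hadef] at this
      omega
    · have := nextA_le hc h.le
      rw [← hbdef] at this
      omega
  have hab : a < b := by omega
  have e0 := buildC_seg hg hel hT himg ht ha hb hab hgap (i - 1) (by omega) (by omega)
  have e1 := buildC_seg hg hel hT himg ht ha hb hab hgap i (by omega) (by omega)
  have e2 := buildC_seg hg hel hT himg ht ha hb hab hgap (i + 1) (by omega) (by omega)
  have hpab := anchorPt_lt himg hg hT ht ha hb hab
  have hlen : rk (anchorPt rk t n b) - rk (anchorPt rk t n a) = b - a := by
    rw [anchorPt_rank himg hg hT ha, anchorPt_rank himg hg hT hb]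
  have hspec := incChain_spec (rk := rk) (lab := lab) hg hel hpab
  have hinc := hspec.2 (i - 1 - a) (by rw [hlen]; omega)
  rw [DescentAt] at hd
  rw [e0, e1, e2] at hd
  have f1 : i - 1 - a + 1 = i - a := by omega
  have f2 : i - 1 - a + 2 = i + 1 - a := by omega
  rw [f1, f2] at hinc
  exact absurd hd (not_lt.mpr hinc)

open Classical in
include hg hel hT himg ht in
lemma buildC_image (hcard : t.card = T.card) : T.image (buildC rk lab T t n) = t := by
  classical
  have hmem : ∀ i ∈ T, buildC rk lab T t n i = anchorPt rk t n i := by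
    intro i hi
    have := Finset.mem_Icc.mp (hT hi)
    rw [buildC, if_neg (by omega), if_pos (mem_ancs_of_mem hT hi)]
  apply Finset.ext
  intro x
  simp only [Finset.mem_image]
  constructor
  · rintro ⟨i, hi, rfl⟩
    rw [hmem i hi]
    exact (anchorPt_mem_rank himg hT hi).1
  · intro hx
    have hrx : rk x ∈ T := himg ▸ Finset.mem_image.mpr ⟨x, hx, rfl⟩
    refine ⟨rk x, hrx, ?_⟩
    rw [hmem _ hrx]
    have hmr := anchorPt_mem_rank himg hT hrx
    have hinj : Set.InjOn rk (t : Set P) := by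
      rw [← Finset.card_image_iff, himg, hcard]
    exact hinj hmr.1 hx hmr.2

end Build

section Count

variable {P : Type*} [PartialOrder P] [BoundedOrder P] [Fintype P]
variable {n : ℕ} {rk : P → ℕ} {lab : P → P → ℤ}

lemma maxChain_finite : Finite (MaxChain n P) := by
  have hinj : Function.Injective (fun m : MaxChain n P => (fun j : Fin (n + 1) => m.1 j)) := by
    intro m m' h
    apply Subtype.ext
    funext i
    rcases le_or_gt i n with hi | hi
    · have := congrFun h ⟨i, by omega⟩
      simpa using this
    · rw [m.2.2.1 i (by omega), m'.2.2.1 i (by omega)]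
  exact Finite.of_injective _ hinj

open Classical in
lemma alpha_eq (hg : IsGraded n rk) (hel : IsELLabeling lab) {T : Finset ℕ}
    (hT : T ⊆ Finset.Icc 1 (n - 1)) :
    alphaP rk T =
      Nat.card {m : MaxChain n P // ∀ i, 1 ≤ i → i < n → DescentAt lab m.1 i → i ∈ T} := by
  classical
  have hrkmem : ∀ i ∈ T, i ≤ n := by
    intro i hi
    have := Finset.mem_Icc.mp (hT hi); omega
  have hwd : ∀ m : {m : MaxChain n P // ∀ i, 1 ≤ i → i < n → DescentAt lab m.1 i → i ∈ T},
      IsChain (· ≤ ·) ((T.image (fun i => m.1.1 i) : Finset P) : Set P) ∧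
      (T.image (fun i => m.1.1 i)).image rk = T ∧ (T.image (fun i => m.1.1 i)).card = T.card := by
    intro m
    have hrk : ∀ i ∈ T, rk (m.1.1 i) = i := fun i hi => maxchain_rank hg m.1.2 (hrkmem i hi)
    refine ⟨?_, ?_, ?_⟩
    · intro x hx y hy hne
      simp only [Finset.coe_image, Set.mem_image, Finset.mem_coe] at hx hy
      obtain ⟨i, hi, rfl⟩ := hx
      obtain ⟨j, hj, rfl⟩ := hy
      have mono := satChain_mono m.1.2
      rcases le_total i j with h | h
      · exact Or.inl (mono i j h)
      · exact Or.inr (mono j i h)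
    · rw [Finset.image_image]
      have : T.image ((rk ∘ fun i => m.1.1 i)) = T.image id :=
        Finset.image_congr (fun i hi => hrk i hi)
      rw [this, Finset.image_id]
    · apply Finset.card_image_of_injOn
      intro i hi j hj hij
      have h1 := hrk i hi
      have h2 := hrk j hj
      have hij' : m.1.1 i = m.1.1 j := hij
      rw [hij'] at h1
      omega
  symm
  apply Nat.card_eq_of_bijective (fun m => (⟨T.image (fun i => m.1.1 i), hwd m⟩ :
    {t : Finset P // IsChain (· ≤ ·) (t : Set P) ∧ t.image rk = T ∧ t.card = T.card}))
  constructor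
  · intro m m' h
    have himg : T.image (fun i => m.1.1 i) = T.image (fun i => m'.1.1 i) :=
      congrArg Subtype.val h
    apply Subtype.ext
    apply Subtype.ext
    apply chains_eq_of_agree hg hel hT m.1.2 m'.1.2 m.2 m'.2
    intro a ha
    simp only [ancs, Finset.mem_insert] at ha
    rcases ha with rfl | rfl | haT
    · rw [m.1.2.1, m'.1.2.1]
    · rw [m.1.2.2.1 a le_rfl, m'.1.2.2.1 a le_rfl]
    · have hmem : m.1.1 a ∈ T.image (fun i => m'.1.1 i) := by
        rw [← himg]
        exact Finset.mem_image_of_mem _ haT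
      obtain ⟨j, hj, hje⟩ := Finset.mem_image.mp hmem
      have h1 : rk (m.1.1 a) = a := maxchain_rank hg m.1.2 (hrkmem a haT)
      have h2 : rk (m'.1.1 j) = j := maxchain_rank hg m'.1.2 (hrkmem j hj)
      rw [hje] at h2
      have : j = a := by omega
      rw [← hje, this]
  · rintro ⟨t, ht, himg2, hcard⟩
    refine ⟨⟨⟨buildC rk lab T t n, buildC_isSat hg hel hT himg2 ht⟩,
      buildC_desc hg hel hT himg2 ht⟩, ?_⟩
    apply Subtype.ext
    exact buildC_image hg hel hT himg2 ht hcard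

end Count

section IE

lemma neg_one_pow_sub (a b : ℕ) (h : b ≤ a) : (-1 : ℤ) ^ (a - b) = (-1) ^ a * (-1) ^ b := by
  have h2 : ((-1 : ℤ)) ^ b * (-1) ^ b = 1 := by
    rw [← pow_add]
    exact Even.neg_one_pow ⟨b, by ring⟩
  calc (-1 : ℤ) ^ (a - b) = (-1) ^ (a - b) * ((-1) ^ b * (-1) ^ b) := by rw [h2, mul_one]
    _ = ((-1) ^ (a - b) * (-1) ^ b) * (-1) ^ b := by ring
    _ = (-1) ^ (a - b + b) * (-1) ^ b := by rw [pow_add]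
    _ = (-1) ^ a * (-1) ^ b := by rw [Nat.sub_add_cancel h]

open Classical in
lemma inner_ie (D S : Finset ℕ) :
    ∑ T ∈ S.powerset, (-1 : ℤ) ^ (S.card - T.card) * (if D ⊆ T then 1 else 0)
      = if D = S then 1 else 0 := by
  classical
  by_cases hDS : D ⊆ S
  · have step1 : ∑ T ∈ S.powerset, (-1 : ℤ) ^ (S.card - T.card) * (if D ⊆ T then 1 else 0)
        = ∑ T ∈ S.powerset.filter (fun T => D ⊆ T), (-1 : ℤ) ^ (S.card - T.card) := by
      rw [Finset.sum_filter]
      apply Finset.sum_congr rfl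
      intro T hT
      split_ifs <;> simp
    have step2 : ∑ T ∈ S.powerset.filter (fun T => D ⊆ T), (-1 : ℤ) ^ (S.card - T.card)
        = ∑ R ∈ (S \ D).powerset, (-1 : ℤ) ^ ((S \ D).card - R.card) := by
      apply Finset.sum_nbij' (i := fun T => T \ D) (j := fun R => R ∪ D)
      · intro T hT
        rw [Finset.mem_filter, Finset.mem_powerset] at hT
        rw [Finset.mem_powerset]
        exact Finset.sdiff_subset_sdiff hT.1 (Finset.Subset.refl D)
      · intro R hR
        rw [Finset.mem_powerset] at hR
        rw [Finset.mem_filter, Finset.mem_powerset]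
        constructor
        · exact Finset.union_subset (hR.trans (Finset.sdiff_subset)) hDS
        · exact Finset.subset_union_right
      · intro T hT
        rw [Finset.mem_filter, Finset.mem_powerset] at hT
        rw [Finset.sdiff_union_of_subset hT.2]
      · intro R hR
        rw [Finset.mem_powerset] at hR
        rw [Finset.union_sdiff_right]
        exact Finset.sdiff_eq_self_of_disjoint (Finset.disjoint_right.mpr
          (fun a haD haR => (Finset.mem_sdiff.mp (hR haR)).2 haD))
      · intro T hT
        rw [Finset.mem_filter, Finset.mem_powerset] at hT
        congr 1
        have h1 : (T \ D).card = T.card - D.card := Finset.card_sdiff_of_subset hT.2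
        have h2 : (S \ D).card = S.card - D.card := Finset.card_sdiff_of_subset hDS
        have h3 : D.card ≤ T.card := Finset.card_le_card hT.2
        have h4 : T.card ≤ S.card := Finset.card_le_card hT.1
        have h5 : D.card ≤ S.card := Finset.card_le_card hDS
        omega
    have step3 : ∑ R ∈ (S \ D).powerset, (-1 : ℤ) ^ ((S \ D).card - R.card)
        = (-1 : ℤ) ^ (S \ D).card * (if (S \ D) = ∅ then 1 else 0) := by
      have : ∀ R ∈ (S \ D).powerset, (-1 : ℤ) ^ ((S \ D).card - R.card)
          = (-1 : ℤ) ^ (S \ D).card * (-1 : ℤ) ^ R.card := by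
        intro R hR
        exact neg_one_pow_sub _ _ (Finset.card_le_card (Finset.mem_powerset.mp hR))
      rw [Finset.sum_congr rfl this, ← Finset.mul_sum,
        Finset.sum_powerset_neg_one_pow_card]
    rw [step1, step2, step3]
    by_cases hU : S \ D = ∅
    · have hDS' : D = S :=
        Finset.Subset.antisymm hDS (Finset.sdiff_eq_empty_iff_subset.mp hU)
      rw [if_pos hU, if_pos hDS', hU]
      simp
    · have hDS' : D ≠ S := by
        intro h
        exact hU (by rw [h, Finset.sdiff_self])
      rw [if_neg hU, if_neg hDS', mul_zero]
  · rw [if_neg (fun h => hDS (by rw [h]))]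
    apply Finset.sum_eq_zero
    intro T hT
    have hTS := Finset.mem_powerset.mp hT
    rw [if_neg (fun h => hDS (h.trans hTS)), mul_zero]

open Classical in
lemma incl_excl {α : Type*} [Fintype α] (D : α → Finset ℕ) (S : Finset ℕ) :
    ∑ T ∈ S.powerset, (-1 : ℤ) ^ (S.card - T.card) * (Nat.card {m : α // D m ⊆ T} : ℤ)
      = (Nat.card {m : α // D m = S} : ℤ) := by
  classical
  have hc : ∀ (p : α → Prop), (Nat.card {m : α // p m} : ℤ)
      = ∑ m : α, (if p m then (1 : ℤ) else 0) := by
    intro p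
    rw [Nat.card_eq_fintype_card, Fintype.card_subtype, Finset.card_filter]
    push_cast
    rfl
  rw [show (Nat.card {m : α // D m = S} : ℤ) = _ from hc _]
  simp only [hc, Finset.mul_sum]
  rw [Finset.sum_comm]
  refine Finset.sum_congr rfl fun m _ => ?_
  refine Eq.trans (Finset.sum_congr rfl fun T _ => ?_) ((inner_ie (D m) S).trans ?_)
  · congr
  · congr
end IE


/-- For an `S_n` EL-labeled finite graded poset `P` and any
`S ⊆ [n-1]`, the flag `h`-vector entry `β_P(S)` equals the number of maximal chains of
`P` whose label permutation has descent set exactly `S`. -/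
theorem betaP_eq_descent_count {P : Type*} [PartialOrder P] [BoundedOrder P] [Fintype P]
    {n : ℕ} (rk : P → ℕ) (hg : IsGraded n rk)
    (lab : P → P → ℤ) (hsn : IsSnELLabeling n lab)
    (S : Finset ℕ) (hS : S ⊆ Finset.Icc 1 (n - 1)) :
    betaP rk S =
      (Nat.card {m : MaxChain n P //
        ∀ i, 1 ≤ i → i < n → (DescentAt lab m.1 i ↔ i ∈ S)} : ℤ) := by
  classical
  obtain ⟨hel, -⟩ := hsn
  haveI : Finite (MaxChain n P) := maxChain_finite
  haveI : Fintype (MaxChain n P) := Fintype.ofFinite _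
  set D : MaxChain n P → Finset ℕ :=
    fun m => (Finset.Icc 1 (n - 1)).filter (fun i => DescentAt lab m.1 i) with hD
  have hDspec : ∀ (m : MaxChain n P) (T : Finset ℕ), T ⊆ Finset.Icc 1 (n - 1) →
      ((∀ i, 1 ≤ i → i < n → DescentAt lab m.1 i → i ∈ T) ↔ D m ⊆ T) := by
    intro m T hT
    constructor
    · intro h i hi
      rw [hD] at hi
      simp only [Finset.mem_filter, Finset.mem_Icc] at hi
      exact h i hi.1.1 (by omega) hi.2
    · intro h i h1 h2 hdes
      apply h
      rw [hD]
      simp only [Finset.mem_filter, Finset.mem_Icc]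
      exact ⟨⟨h1, by omega⟩, hdes⟩
  have hDeq : ∀ m : MaxChain n P,
      ((∀ i, 1 ≤ i → i < n → (DescentAt lab m.1 i ↔ i ∈ S)) ↔ D m = S) := by
    intro m
    constructor
    · intro h
      apply Finset.ext
      intro i
      rw [hD]
      simp only [Finset.mem_filter, Finset.mem_Icc]
      constructor
      · rintro ⟨⟨hi1, hi2⟩, hdes⟩
        exact (h i hi1 (by omega)).mp hdes
      · intro hiS
        have := Finset.mem_Icc.mp (hS hiS)
        exact ⟨⟨this.1, this.2⟩, (h i this.1 (by omega)).mpr hiS⟩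
    · intro h i h1 h2
      constructor
      · intro hdes
        rw [← h, hD]
        simp only [Finset.mem_filter, Finset.mem_Icc]
        exact ⟨⟨h1, by omega⟩, hdes⟩
      · intro hiS
        rw [← h, hD] at hiS
        simp only [Finset.mem_filter] at hiS
        exact hiS.2
  have hrhs : Nat.card {m : MaxChain n P //
      ∀ i, 1 ≤ i → i < n → (DescentAt lab m.1 i ↔ i ∈ S)}
      = Nat.card {m : MaxChain n P // D m = S} :=
    Nat.card_congr (Equiv.subtypeEquivRight hDeq)
  have halpha : ∀ T ∈ S.powerset, (-1 : ℤ) ^ (S.card - T.card) * (alphaP (P := P) rk T : ℤ)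
      = (-1 : ℤ) ^ (S.card - T.card) * (Nat.card {m : MaxChain n P // D m ⊆ T} : ℤ) := by
    intro T hT'
    have hTsub := (Finset.mem_powerset.mp hT').trans hS
    congr 2
    rw [alpha_eq (lab := lab) hg hel hTsub]
    exact Nat.card_congr (Equiv.subtypeEquivRight (fun m => hDspec m T hTsub))
  rw [hrhs, betaP, Finset.sum_congr rfl halpha]
  exact incl_excl D S
end
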